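/- arXiv:1103.0498 — 3 statements merged into one kernel-verified Lean document; each statement's English description precedes it below -/
import Mathlib

section
/- If there exists a family of vectors (a_i)_{i=1,...,d} in ℝ^d and an index j < d such that f(x) = n(a_{j+1}ᵀx,...,a_dᵀx)·h(a_1ᵀx,...,a_jᵀx) for all x, where f is a probability density on ℝ^d, n is a probability density on ℝ^{d−j}, and h is a probability density on ℝ^j, then the family (a_1,...,a_d) is linearly independent, hence a basis of ℝ^d. -/
/-!
If the `a i` were linearly dependent, some `v ≠ 0` would be orthogonal to all of them, and the
factorization would make `f` invariant under translation by `v`. But an integrable function `g`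
invariant under a nonzero translation `v` has integral zero: for a functional `φ` with `φ v = 1`,
the Fourier transform `G t = ∫ 𝐞 (-t φ x) g x` satisfies `G t = 𝐞 t • G t`, hence vanishes on
`(0, 1)`, hence at `0` by continuity, and `G 0 = ∫ g`. This contradicts `∫ f = 1`.
-/

open MeasureTheory Set Matrix
open scoped FourierTransform

lemma Real.fourierChar_ne_one_of_mem_Ioo {t : ℝ} (ht : t ∈ Ioo (0 : ℝ) 1) : 𝐞 t ≠ 1 := by
  rw [Real.fourierChar_apply', Ne, Circle.exp_eq_one]
  rintro ⟨k, hk⟩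
  have htk : t = k := by nlinarith [Real.pi_pos]
  have h0 : (0 : ℤ) < k := by exact_mod_cast htk ▸ ht.1
  have h1 : k < 1 := by exact_mod_cast htk ▸ ht.2
  omega

theorem MeasureTheory.Integrable.integral_eq_zero_of_periodic {V E : Type*}
    [NormedAddCommGroup V] [NormedSpace ℝ V] [MeasurableSpace V] [BorelSpace V]
    [SeparatingDual ℝ V] [NormedAddCommGroup E] [NormedSpace ℂ E]
    {μ : Measure V} [μ.IsAddRightInvariant] {g : V → E} (hg : Integrable g μ) {v : V}
    (hv : v ≠ 0) (hper : Function.Periodic g v) :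
    ∫ x, g x ∂μ = 0 := by
  obtain ⟨φ, hφ⟩ := SeparatingDual.exists_eq_one (R := ℝ) hv
  set L : V →ₗ[ℝ] ℝ →ₗ[ℝ] ℝ := (LinearMap.mul ℝ ℝ).comp (φ : V →ₗ[ℝ] ℝ)
  have hL : Continuous fun p : V × ℝ => L p.1 p.2 := by
    simp only [L, LinearMap.coe_comp, ContinuousLinearMap.coe_coe, Function.comp_apply,
      LinearMap.mul_apply_apply]
    fun_prop
  set G := VectorFourier.fourierIntegral 𝐞 μ L g
  have hG : Continuous G :=
    VectorFourier.fourierIntegral_continuous Real.continuous_fourierChar hL hg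
  have hshift (t : ℝ) : G t = 𝐞 t • G t := by
    have := congrFun (VectorFourier.fourierIntegral_comp_add_right 𝐞 μ L g v) t
    simpa [L, hφ, Function.comp_def, show ∀ x, g (x + v) = g x from hper] using this
  have hvanish : EqOn G 0 (Ioo 0 1) := by
    intro t ht
    have : ((𝐞 t : ℂ) - 1) • G t = 0 := by
      rw [sub_smul, one_smul, ← Circle.smul_def, ← hshift, sub_self]
    refine (smul_eq_zero.1 this).resolve_left ?_
    exact sub_ne_zero.2 fun h => Real.fourierChar_ne_one_of_mem_Ioo ht (Circle.coe_eq_one.1 h)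
  have hG0 : G 0 = 0 := by
    have := hvanish.closure hG continuous_const
    rw [closure_Ioo zero_ne_one] at this
    exact this ⟨le_rfl, zero_le_one⟩
  simpa [G, VectorFourier.fourierIntegral] using hG0

theorem Matrix.exists_mulVec_eq_zero_of_not_linearIndependent_row {K m : Type*} [Field K]
    [Fintype m] [DecidableEq m] {A : Matrix m m K} (hA : ¬ LinearIndependent K A.row) :
    ∃ v ≠ 0, A *ᵥ v = 0 := by
  rwa [exists_mulVec_eq_zero_iff, ← not_ne_iff, ← isUnit_iff_ne_zero, ← isUnit_iff_isUnit_det,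
    ← linearIndependent_rows_iff_isUnit]

/-- If a probability density `f` on `ℝ^d` factorizes as
`f(x) = n(a_{j+1}ᵀx,…,a_dᵀx) · h(a_1ᵀx,…,a_jᵀx)` with `n`, `h` probability densities,
then the family `(a_1,…,a_d)` is linearly independent (hence a basis of `ℝ^d`). -/
theorem factorized_density_family_linearIndependent
    (d j : ℕ) (hj : j < d)
    (a : Fin d → (Fin d → ℝ))
    (f : (Fin d → ℝ) → ℝ) (n : (Fin (d - j) → ℝ) → ℝ) (h : (Fin j → ℝ) → ℝ)
    (hfint : Integrable f) (hf1 : ∫ x, f x = 1)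
    (hfact : ∀ x, f x
      = n (fun i : Fin (d - j) => a ⟨j + i.1, by omega⟩ ⬝ᵥ x)
        * h (fun i : Fin j => a ⟨i.1, by omega⟩ ⬝ᵥ x)) :
    LinearIndependent ℝ a := by
  by_contra hli
  obtain ⟨v, hv, hAv⟩ := exists_mulVec_eq_zero_of_not_linearIndependent_row (A := of a) hli
  have hav (i : Fin d) : a i ⬝ᵥ v = 0 := congrFun hAv i
  have hper : Function.Periodic f v := fun x => by
    simp only [hfact, dotProduct_add, hav, add_zero]
  have h0 := (hfint.ofReal (𝕜 := ℂ)).integral_eq_zero_of_periodic hv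
    fun x => congrArg Complex.ofReal (hper x)
  rw [integral_ofReal, hf1] at h0
  exact one_ne_zero (Complex.ofReal_eq_zero.1 h0)
end

section
/- Uniqueness part of Sklar's theorem for densities: if F is a joint CDF on ℝ^d with continuous marginal CDFs F_1,...,F_d, then there is a unique copula C with F(x) = C(F_1(x_1),...,F_d(x_d)) for all x, given by C(u) = F(F_1^{-1}(u_1),...,F_d^{-1}(u_d)) where F_i^{-1} is the generalized inverse (quantile function) of F_i. -/
open MeasureTheory Set

/-- A `d`-dimensional copula: the joint CDF of a probability measure on `[0,1]^d`
all of whose one-dimensional marginals are uniform on `[0,1]`. -/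
def IsCopula (d : ℕ) (C : (Fin d → ℝ) → ℝ) : Prop :=
  ∃ μ : Measure (Fin d → ℝ), IsProbabilityMeasure μ ∧
    (∀ i : Fin d, Measure.map (fun x => x i) μ = volume.restrict (Icc (0:ℝ) 1)) ∧
    (∀ u : Fin d → ℝ, C u = (μ {x | ∀ i, x i ≤ u i}).toReal)

/-!
Pushing `μ` forward along `x ↦ (F₁(x₁), …, F_d(x_d))` gives a copula, because a continuous CDF
maps its law to the uniform law on `[0, 1]`; this copula represents `F` because the events
`Fᵢ(yᵢ) ≤ Fᵢ(xᵢ)` and `yᵢ ≤ xᵢ` differ by a null set. Conversely, `Fᵢ(Fᵢ⁻¹(u)) = u` on `(0, 1)`,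
so every copula representing `F` is given by the quantile formula on the open cube. Finally a
copula is determined by its values on the open cube: since its marginals are uniform, `C u - C v`
is at most the total length of the coordinate intervals from `v` to `u` inside `[0, 1]`, so `C` at
any point is the limit of its values at the points clamped into `[ε, 1 - ε]ᵈ`.
-/

open Filter Topology ProbabilityTheory

namespace ProbabilityTheory

variable {m : Measure ℝ}

theorem exists_cdf_eq (hc : Continuous (cdf m)) {u : ℝ} (hu : u ∈ Ioo 0 1) :
    ∃ t, cdf m t = u :=
  mem_range_of_exists_le_of_exists_ge hc
    ((tendsto_cdf_atBot m).eventually (eventually_le_nhds hu.1)).exists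
    ((tendsto_cdf_atTop m).eventually (eventually_ge_nhds hu.2)).exists

theorem cdf_sInf_setOf_le_cdf (hc : Continuous (cdf m)) {u : ℝ} (hu : u ∈ Ioo 0 1) :
    cdf m (sInf {t | u ≤ cdf m t}) = u := by
  obtain ⟨s, hs⟩ := exists_cdf_eq hc hu
  obtain ⟨b, hb⟩ := ((tendsto_cdf_atBot m).eventually (eventually_lt_nhds hu.1)).exists
  have hbdd : BddBelow {t | u ≤ cdf m t} :=
    ⟨b, fun t ht => not_lt.1 fun htb => (hb.trans_le ht).not_ge (monotone_cdf m htb.le)⟩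
  refine le_antisymm ?_ ((isClosed_le continuous_const hc).csInf_mem ⟨s, hs.ge⟩ hbdd)
  calc cdf m (sInf {t | u ≤ cdf m t}) ≤ cdf m s := monotone_cdf m (csInf_le hbdd hs.ge)
    _ = u := hs

variable [IsProbabilityMeasure m]

theorem measureReal_setOf_cdf_le_le (hc : Continuous (cdf m)) {c : ℝ} (hc0 : 0 ≤ c) :
    m.real {t | cdf m t ≤ c} ≤ c := by
  refine le_of_forall_gt_imp_ge_of_dense fun c' hc' => ?_
  rcases lt_or_ge c' 1 with hc'1 | hc'1
  · obtain ⟨s, rfl⟩ := exists_cdf_eq hc ⟨hc0.trans_lt hc', hc'1⟩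
    rw [cdf_eq_real]
    exact measureReal_mono fun t ht => not_lt.1 fun hst =>
      (ht.trans_lt hc').not_ge (monotone_cdf m hst.le)
  · exact measureReal_le_one.trans hc'1

theorem le_measureReal_setOf_cdf_le (hc : Continuous (cdf m)) {c : ℝ} (hc1 : c < 1) :
    c ≤ m.real {t | cdf m t ≤ c} := by
  rcases le_or_gt c 0 with hc0 | hc0
  · exact hc0.trans measureReal_nonneg
  · obtain ⟨s, rfl⟩ := exists_cdf_eq hc ⟨hc0, hc1⟩
    exact (cdf_eq_real m s).trans_le (measureReal_mono fun t ht => monotone_cdf m ht)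

theorem map_cdf (hc : Continuous (cdf m)) : m.map (cdf m) = volume.restrict (Icc 0 1) := by
  refine Measure.ext_of_Iic _ _ fun c => ?_
  rw [Measure.map_apply hc.measurable measurableSet_Iic,
    Measure.restrict_apply measurableSet_Iic]
  rcases lt_or_ge c 0 with hc0 | hc0
  · have h₁ : cdf m ⁻¹' Iic c = ∅ := eq_empty_of_forall_notMem fun t ht =>
      (cdf_nonneg m t).not_gt (lt_of_le_of_lt ht hc0)
    have h₂ : Iic c ∩ Icc (0 : ℝ) 1 = ∅ := eq_empty_of_forall_notMem fun x hx =>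
      (hx.2.1.trans hx.1).not_gt hc0
    rw [h₁, h₂, measure_empty, measure_empty]
  rcases lt_or_ge c 1 with hc1 | hc1
  · have h₂ : Iic c ∩ Icc (0 : ℝ) 1 = Icc 0 c := by
      ext x
      simp only [mem_inter_iff, mem_Iic, mem_Icc]
      exact ⟨fun h => ⟨h.2.1, h.1⟩, fun h => ⟨h.2, h.1, h.2.trans hc1.le⟩⟩
    rw [h₂, Real.volume_Icc, sub_zero, ← ofReal_measureReal]
    exact congrArg ENNReal.ofReal
      ((measureReal_setOf_cdf_le_le hc hc0).antisymm (le_measureReal_setOf_cdf_le hc hc1))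
  · have h₁ : cdf m ⁻¹' Iic c = univ := eq_univ_of_forall fun t => (cdf_le_one m t).trans hc1
    rw [h₁, inter_eq_right.2 fun x hx => hx.2.trans hc1, Real.volume_Icc, measure_univ]
    simp

theorem ae_cdf_le_cdf_iff (hc : Continuous (cdf m)) (x : ℝ) :
    ∀ᵐ t ∂m, cdf m t ≤ cdf m x ↔ t ≤ x := by
  have hsub : Iic x ⊆ {t | cdf m t ≤ cdf m x} := fun t ht => monotone_cdf m ht
  have hle : m {t | cdf m t ≤ cdf m x} ≤ m (Iic x) := by
    rw [← ofReal_measureReal, ← ofReal_measureReal, ← cdf_eq_real]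
    exact ENNReal.ofReal_le_ofReal (measureReal_setOf_cdf_le_le hc (cdf_nonneg m x))
  filter_upwards [eventuallyEq_set.1
    (ae_eq_of_subset_of_measure_ge hsub hle measurableSet_Iic.nullMeasurableSet
      (measure_ne_top _ _))] with t ht
  exact ht.symm

section Marginals

variable {ι : Type*} {μ : Measure (ι → ℝ)} [IsProbabilityMeasure μ]

instance isProbabilityMeasure_map_eval (i : ι) : IsProbabilityMeasure (μ.map fun x => x i) :=
  Measure.isProbabilityMeasure_map (measurable_pi_apply i).aemeasurable

noncomputable def cdfTransform (μ : Measure (ι → ℝ)) (x : ι → ℝ) : ι → ℝ :=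
  fun i => cdf (μ.map fun y => y i) (x i)

theorem measurable_cdfTransform (μ : Measure (ι → ℝ)) : Measurable (cdfTransform μ) :=
  measurable_pi_lambda _ fun i => (monotone_cdf _).measurable.comp (measurable_pi_apply i)

theorem map_eval_map_cdfTransform (hc : ∀ i, Continuous (cdf (μ.map fun x => x i))) (i : ι) :
    (μ.map (cdfTransform μ)).map (fun z => z i) = volume.restrict (Icc 0 1) := by
  rw [Measure.map_map (measurable_pi_apply i) (measurable_cdfTransform μ), ← map_cdf (hc i),
    Measure.map_map (hc i).measurable (measurable_pi_apply i)]
  rfl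

theorem map_cdfTransform_Iic [Countable ι] (hc : ∀ i, Continuous (cdf (μ.map fun x => x i)))
    (x : ι → ℝ) :
    μ.map (cdfTransform μ) (Iic (cdfTransform μ x)) = μ (Iic x) := by
  rw [Measure.map_apply (measurable_cdfTransform μ) measurableSet_Iic]
  refine measure_congr (eventuallyEq_set.2 ?_)
  have h : ∀ᵐ y ∂μ, ∀ i, cdfTransform μ y i ≤ cdfTransform μ x i ↔ y i ≤ x i :=
    ae_all_iff.2 fun i =>
      ae_of_ae_map (measurable_pi_apply i).aemeasurable (ae_cdf_le_cdf_iff (hc i) (x i))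
  filter_upwards [h] with y hy
  exact forall_congr' hy

end Marginals

end ProbabilityTheory

theorem measureReal_Iic_le_add_sum {ι : Type*} [Fintype ι] {ν : Measure (ι → ℝ)}
    [IsFiniteMeasure ν] (u v : ι → ℝ) :
    ν.real (Iic u) ≤ ν.real (Iic v) + ∑ i, (ν.map fun x => x i).real (Ioc (v i) (u i)) := by
  have hsub : Iic u ⊆ Iic v ∪ ⋃ i, (fun x => x i) ⁻¹' Ioc (v i) (u i) := by
    intro x hx
    by_cases hxv : x ≤ v
    · exact Or.inl hxv
    · obtain ⟨i, hi⟩ := not_forall.1 hxv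
      exact Or.inr (mem_iUnion.2 ⟨i, not_le.1 hi, hx i⟩)
  calc ν.real (Iic u) ≤ ν.real (Iic v ∪ ⋃ i, (fun x => x i) ⁻¹' Ioc (v i) (u i)) :=
        measureReal_mono hsub
    _ ≤ ν.real (Iic v) + ∑ i, ν.real ((fun x => x i) ⁻¹' Ioc (v i) (u i)) :=
        (measureReal_union_le _ _).trans (add_le_add le_rfl (measureReal_iUnion_fintype_le _))
    _ = _ := by simp only [map_measureReal_apply (measurable_pi_apply _) measurableSet_Ioc]

theorem volume_real_Ioc_inter_Icc_le (a b : ℝ) :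
    volume.real (Ioc a b ∩ Icc 0 1) ≤ max (min b 1 - max a 0) 0 := by
  calc volume.real (Ioc a b ∩ Icc 0 1) ≤ volume.real (Icc a b ∩ Icc 0 1) :=
        measureReal_mono (inter_subset_inter_left _ Ioc_subset_Icc_self)
          (by rw [Icc_inter_Icc]; exact measure_Icc_lt_top.ne)
    _ = max (min b 1 - max a 0) 0 := by rw [Icc_inter_Icc, Real.volume_real_Icc]

def clampToCube {ι : Type*} (ε : ℝ) (u : ι → ℝ) : ι → ℝ :=
  fun i => max ε (min (u i) (1 - ε))

theorem clampToCube_mem_Ioo {ι : Type*} {ε : ℝ} (hε : ε ∈ Ioo 0 (1 / 2)) (u : ι → ℝ) (i : ι) :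
    clampToCube ε u i ∈ Ioo 0 1 := by
  obtain ⟨hε0, hε1⟩ := hε
  constructor
  · exact hε0.trans_le (le_max_left _ _)
  · exact max_lt (by linarith) ((min_le_right _ _).trans_lt (by linarith))

namespace IsCopula

variable {d : ℕ} {C : (Fin d → ℝ) → ℝ}

theorem dist_clampToCube_le (hC : IsCopula d C) (u : Fin d → ℝ) {ε : ℝ} (hε : 0 ≤ ε) :
    dist (C (clampToCube ε u)) (C u) ≤ d * ε := by
  obtain ⟨ν, hν, hm, hCν⟩ := hC
  obtain rfl : C = fun u => ν.real (Iic u) := funext hCν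
  have hlip : ∀ u v : Fin d → ℝ,
      ν.real (Iic u) ≤ ν.real (Iic v) + ∑ i, volume.real (Ioc (v i) (u i) ∩ Icc 0 1) := by
    intro u v
    simpa only [hm, measureReal_restrict_apply measurableSet_Ioc]
      using measureReal_Iic_le_add_sum (ν := ν) u v
  have hsum : ∀ f : Fin d → ℝ, (∀ i, f i ≤ ε) → ∑ i, f i ≤ d * ε := fun f hf => by
    simpa using Finset.sum_le_card_nsmul Finset.univ f ε fun i _ => hf i
  have hup : ∑ i, volume.real (Ioc (clampToCube ε u i) (u i) ∩ Icc 0 1) ≤ d * ε :=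
    hsum _ fun i => (volume_real_Ioc_inter_Icc_le _ _).trans <| by
      simp only [clampToCube, max_def, min_def]; split_ifs <;> linarith
  have hdown : ∑ i, volume.real (Ioc (u i) (clampToCube ε u i) ∩ Icc 0 1) ≤ d * ε :=
    hsum _ fun i => (volume_real_Ioc_inter_Icc_le _ _).trans <| by
      simp only [clampToCube, max_def, min_def]; split_ifs <;> linarith
  rw [Real.dist_eq, abs_sub_le_iff]
  constructor <;> linarith [hlip u (clampToCube ε u), hlip (clampToCube ε u) u]

theorem tendsto_clampToCube (hC : IsCopula d C) (u : Fin d → ℝ) :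
    Tendsto (fun ε => C (clampToCube ε u)) (𝓝[>] 0) (𝓝 (C u)) := by
  refine tendsto_iff_dist_tendsto_zero.2 <|
    squeeze_zero' (Eventually.of_forall fun _ => dist_nonneg)
      (eventually_nhdsWithin_of_forall fun ε hε => hC.dist_clampToCube_le u hε.le) ?_
  exact tendsto_nhdsWithin_of_tendsto_nhds
    (by simpa using (continuous_const_mul (d : ℝ)).tendsto 0)

theorem ext_of_eqOn_Ioo {C' : (Fin d → ℝ) → ℝ} (hC : IsCopula d C) (hC' : IsCopula d C')
    (h : ∀ u : Fin d → ℝ, (∀ i, u i ∈ Ioo (0 : ℝ) 1) → C u = C' u) : C = C' := by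
  funext u
  refine tendsto_nhds_unique_of_eventuallyEq (hC.tendsto_clampToCube u)
    (hC'.tendsto_clampToCube u) ?_
  filter_upwards [Ioo_mem_nhdsGT (by norm_num : (0 : ℝ) < 1 / 2)] with ε hε
  exact h _ (clampToCube_mem_Ioo hε u)

end IsCopula

theorem isCopula_map_cdfTransform {d : ℕ} {μ : Measure (Fin d → ℝ)} [IsProbabilityMeasure μ]
    (hc : ∀ i, Continuous (cdf (μ.map fun x => x i))) :
    IsCopula d fun u => (μ.map (cdfTransform μ)).real (Iic u) :=
  ⟨_, Measure.isProbabilityMeasure_map (measurable_cdfTransform μ).aemeasurable,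
    map_eval_map_cdfTransform hc, fun _ => rfl⟩

/-- Uniqueness part of Sklar's theorem: if the marginal CDFs of a joint CDF `F` are
continuous, there is a unique copula `C` with `F(x) = C(F₁(x₁),…,F_d(x_d))`, given on the
open cube by the quantile formula `C(u) = F(F₁⁻¹(u₁),…,F_d⁻¹(u_d))`. -/
theorem sklar_uniqueness
    (d : ℕ) (μ : Measure (Fin d → ℝ)) [IsProbabilityMeasure μ]
    (F : (Fin d → ℝ) → ℝ) (hF : ∀ x, F x = (μ {y | ∀ i, y i ≤ x i}).toReal)
    (Fm : Fin d → ℝ → ℝ) (hFm : ∀ i t, Fm i t = (μ {y | y i ≤ t}).toReal)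
    (hcont : ∀ i, Continuous (Fm i)) :
    (∃! C : (Fin d → ℝ) → ℝ,
        IsCopula d C ∧ ∀ x, F x = C (fun i => Fm i (x i))) ∧
    (∀ C : (Fin d → ℝ) → ℝ,
      (IsCopula d C ∧ ∀ x, F x = C (fun i => Fm i (x i))) →
      ∀ u : Fin d → ℝ, (∀ i, u i ∈ Ioo (0:ℝ) 1) →
        C u = F (fun i => sInf {t : ℝ | u i ≤ Fm i t})) := by
  obtain rfl : Fm = fun i t => cdf (μ.map fun x => x i) t := funext₂ fun i t => by
    rw [hFm, cdf_eq_real, map_measureReal_apply (measurable_pi_apply i) measurableSet_Iic]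
    rfl
  -- `{y | ∀ i, y i ≤ x i}` is `Iic x` for the product order
  obtain rfl : F = fun x => μ.real (Iic x) := funext hF
  have hquantile : ∀ C : (Fin d → ℝ) → ℝ, (∀ x, μ.real (Iic x) = C (cdfTransform μ x)) →
      ∀ u : Fin d → ℝ, (∀ i, u i ∈ Ioo (0:ℝ) 1) →
        C u = μ.real (Iic fun i => sInf {t | u i ≤ cdf (μ.map fun x => x i) t}) := by
    intro C hC u hu
    rw [hC]
    exact congrArg C (funext fun i => (cdf_sInf_setOf_le_cdf (hcont i) (hu i)).symm)
  set C₀ : (Fin d → ℝ) → ℝ := fun u => (μ.map (cdfTransform μ)).real (Iic u)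
  have hC₀ : ∀ x, μ.real (Iic x) = C₀ (cdfTransform μ x) :=
    fun x => congrArg ENNReal.toReal (map_cdfTransform_Iic hcont x).symm
  refine ⟨⟨C₀, ⟨isCopula_map_cdfTransform hcont, hC₀⟩, fun C hC => ?_⟩,
    fun C hC => hquantile C hC.2⟩
  refine hC.1.ext_of_eqOn_Ioo (isCopula_map_cdfTransform hcont) fun u hu => ?_
  rw [hquantile C hC.2 u hu, hquantile C₀ hC₀ u hu]
end

section
/- Archimedean construction yields a valid bivariate copula: if ψ : (0,1] → [0,∞) is continuous, strictly decreasing, convex, with ψ(1) = 0, and ψ^{[-1]} denotes its pseudo-inverse, then C(u,v) = ψ^{[-1]}(ψ(u) + ψ(v)) is a 2-dimensional copula, i.e., C is grounded, has uniform margins (C(u,1) = u, C(1,v) = v), and is 2-increasing. -/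
/-!
The pseudo-inverse `ψinv` is nonincreasing and convex on `[0, ∞)`. On the range of `ψ` it inverts
a convex decreasing function; past the range it vanishes, and the two regimes fit together
because the convexity inequality of `ψ` still holds with the boundary point `(0, M)` for any
upper bound `M` of `ψ`. For a convex `φ`, `φ x + φ y ≤ φ p + φ q` whenever `p ≤ x ≤ q` and
`x + y = p + q`; at the four sums `ψ uᵢ + ψ vⱼ` this is the 2-increasing property.
-/

open Set Filter Topology

theorem ConvexOn.map_add_map_le_of_add_eq {s : Set ℝ} {f : ℝ → ℝ} (hf : ConvexOn ℝ s f)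
    {p q x y : ℝ} (hp : p ∈ s) (hq : q ∈ s) (hpx : p ≤ x) (hxq : x ≤ q) (hsum : x + y = p + q) :
    f x + f y ≤ f p + f q := by
  rcases hpx.trans hxq |>.eq_or_lt with rfl | hpq
  · obtain rfl : x = p := le_antisymm hxq hpx
    obtain rfl : y = x := by linarith
    rfl
  have hqp : 0 < q - p := sub_pos.2 hpq
  set a := (q - x) / (q - p)
  have ha : 0 ≤ a := div_nonneg (by linarith) hqp.le
  have ha' : 0 ≤ 1 - a := by rw [sub_nonneg, div_le_one hqp]; linarith
  have hx : a • p + (1 - a) • q = x := by simp only [a, smul_eq_mul]; field_simp; ring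
  have hy : (1 - a) • p + a • q = y := by
    simp only [a, smul_eq_mul]; field_simp; linear_combination (p - q) * hsum
  have h₁ := hf.2 hp hq ha ha' (add_sub_cancel _ _)
  have h₂ := hf.2 hp hq ha' ha (sub_add_cancel _ _)
  rw [hx] at h₁
  rw [hy] at h₂
  simp only [smul_eq_mul] at h₁ h₂
  linarith

theorem ConvexOn.map_mul_le_of_forall_le {f : ℝ → ℝ} {r M v a b : ℝ}
    (hf : ConvexOn ℝ (Ioc 0 r) f) (hM : ∀ z ∈ Ioc 0 r, f z ≤ M) (hv : v ∈ Ioc 0 r)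
    (ha : 0 ≤ a) (hb : 0 < b) (hab : a + b = 1) : f (b * v) ≤ a * M + b * f v := by
  obtain rfl : a = 1 - b := by linarith
  -- `b * v` is a convex combination of `s` and `v` whose weight on `s` tends to `1 - b` as `s → 0⁺`
  set μ : ℝ → ℝ := fun s => (1 - b) * v / (v - s)
  have hμ : Tendsto μ (𝓝[>] 0) (𝓝 (1 - b)) := by
    have : ContinuousAt μ 0 := by fun_prop (disch := simp [hv.1.ne'])
    convert this.tendsto.mono_left nhdsWithin_le_nhds using 2
    simp only [μ, sub_zero]
    field_simp [hv.1.ne']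
  have hlim : Tendsto (fun s => f v + μ s * (M - f v)) (𝓝[>] 0) (𝓝 ((1 - b) * M + b * f v)) := by
    convert (hμ.mul_const (M - f v)).const_add (f v) using 2
    ring
  refine ge_of_tendsto hlim ?_
  have hbv : 0 < b * v := mul_pos hb hv.1
  filter_upwards [Ioo_mem_nhdsGT hbv] with s ⟨hs0, hsbv⟩
  have hvs : 0 < v - s := by nlinarith [hv.1]
  have hs : s ∈ Ioc 0 r := ⟨hs0, by nlinarith [hv.2]⟩
  have hμ0 : 0 ≤ μ s := div_nonneg (mul_nonneg ha hv.1.le) hvs.le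
  have hμ1 : 0 ≤ 1 - μ s := by rw [sub_nonneg, div_le_one hvs]; linarith
  have hconv := hf.2 hs hv hμ0 hμ1 (add_sub_cancel _ _)
  have hpt : μ s • s + (1 - μ s) • v = b * v := by
    simp only [μ, smul_eq_mul]; field_simp; ring
  rw [hpt, smul_eq_mul, smul_eq_mul] at hconv
  calc f (b * v) ≤ μ s * f s + (1 - μ s) * f v := hconv
    _ ≤ μ s * M + (1 - μ s) * f v := by gcongr; exact hM s hs
    _ = f v + μ s * (M - f v) := by ring

section Generator

variable {ψ ψinv : ℝ → ℝ}

theorem mem_image_Ioc_of_le (hcont : ContinuousOn ψ (Ioc 0 1)) (hψ1 : ψ 1 = 0) {s t : ℝ}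
    (hs : 0 ≤ s) (hst : s ≤ t) (ht : t ∈ ψ '' Ioc 0 1) : s ∈ ψ '' Ioc 0 1 := by
  obtain ⟨w, hw, rfl⟩ := ht
  have hsub : Icc w 1 ⊆ Ioc 0 1 := fun z hz => ⟨hw.1.trans_le hz.1, hz.2⟩
  exact image_mono hsub <| intermediate_value_Icc' hw.2 (hcont.mono hsub) ⟨hψ1 ▸ hs, hst⟩

theorem lt_of_notMem_image_Ioc (hcont : ContinuousOn ψ (Ioc 0 1)) (hψ1 : ψ 1 = 0) {t u : ℝ}
    (ht0 : 0 ≤ t) (ht : t ∉ ψ '' Ioc 0 1) (hu : u ∈ Ioc 0 1) : ψ u < t :=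
  lt_of_not_ge fun hle => ht <| mem_image_Ioc_of_le hcont hψ1 ht0 hle ⟨u, hu, rfl⟩

theorem nonneg_of_strictAntiOn_Ioc (hanti : StrictAntiOn ψ (Ioc 0 1)) (hψ1 : ψ 1 = 0) {u : ℝ}
    (hu : u ∈ Ioc 0 1) : 0 ≤ ψ u :=
  hψ1 ▸ hanti.antitoneOn hu ⟨one_pos, le_rfl⟩ hu.2

theorem pseudoInverse_mem_Icc
    (hinv₂ : ∀ t ∈ ψ '' Ioc (0:ℝ) 1, ψ (ψinv t) = t ∧ ψinv t ∈ Ioc (0:ℝ) 1)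
    (hinv₃ : ∀ t : ℝ, 0 ≤ t → t ∉ ψ '' Ioc (0:ℝ) 1 → ψinv t = 0) {t : ℝ} (ht : 0 ≤ t) :
    ψinv t ∈ Icc 0 1 := by
  by_cases h : t ∈ ψ '' Ioc 0 1
  · exact Ioc_subset_Icc_self (hinv₂ t h).2
  · simp [hinv₃ t ht h]

theorem antitoneOn_pseudoInverse (hcont : ContinuousOn ψ (Ioc 0 1))
    (hanti : StrictAntiOn ψ (Ioc 0 1)) (hψ1 : ψ 1 = 0)
    (hinv₂ : ∀ t ∈ ψ '' Ioc (0:ℝ) 1, ψ (ψinv t) = t ∧ ψinv t ∈ Ioc (0:ℝ) 1)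
    (hinv₃ : ∀ t : ℝ, 0 ≤ t → t ∉ ψ '' Ioc (0:ℝ) 1 → ψinv t = 0) :
    AntitoneOn ψinv (Ici 0) := by
  intro s hs t ht hst
  by_cases h : t ∈ ψ '' Ioc 0 1
  · obtain ⟨hψt, ht'⟩ := hinv₂ t h
    obtain ⟨hψs, hs'⟩ := hinv₂ s (mem_image_Ioc_of_le hcont hψ1 hs hst h)
    exact (hanti.le_iff_ge hs' ht').1 (by rwa [hψs, hψt])
  · rw [hinv₃ t ht h]
    exact (pseudoInverse_mem_Icc hinv₂ hinv₃ hs).1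

theorem pseudoInverse_le_of_le (hcont : ContinuousOn ψ (Ioc 0 1))
    (hanti : StrictAntiOn ψ (Ioc 0 1)) (hψ1 : ψ 1 = 0)
    (hinv₁ : ∀ u ∈ Ioc (0:ℝ) 1, ψinv (ψ u) = u)
    (hinv₂ : ∀ t ∈ ψ '' Ioc (0:ℝ) 1, ψ (ψinv t) = t ∧ ψinv t ∈ Ioc (0:ℝ) 1)
    (hinv₃ : ∀ t : ℝ, 0 ≤ t → t ∉ ψ '' Ioc (0:ℝ) 1 → ψinv t = 0) {t w : ℝ}
    (hw : w ∈ Ioc 0 1) (hwt : ψ w ≤ t) : ψinv t ≤ w := by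
  have hψw := nonneg_of_strictAntiOn_Ioc hanti hψ1 hw
  simpa only [hinv₁ w hw] using
    antitoneOn_pseudoInverse hcont hanti hψ1 hinv₂ hinv₃ hψw (hψw.trans hwt) hwt

theorem convexOn_pseudoInverse (hcont : ContinuousOn ψ (Ioc 0 1))
    (hanti : StrictAntiOn ψ (Ioc 0 1)) (hconv : ConvexOn ℝ (Ioc 0 1) ψ) (hψ1 : ψ 1 = 0)
    (hinv₁ : ∀ u ∈ Ioc (0:ℝ) 1, ψinv (ψ u) = u)
    (hinv₂ : ∀ t ∈ ψ '' Ioc (0:ℝ) 1, ψ (ψinv t) = t ∧ ψinv t ∈ Ioc (0:ℝ) 1)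
    (hinv₃ : ∀ t : ℝ, 0 ≤ t → t ∉ ψ '' Ioc (0:ℝ) 1 → ψinv t = 0) :
    ConvexOn ℝ (Ici 0) ψinv := by
  refine convexOn_iff_forall_pos.2 ⟨convex_Ici 0, fun x hx y hy a b ha hb hab => ?_⟩
  rw [mem_Ici] at hx hy
  simp only [smul_eq_mul]
  have hle {w : ℝ} : w ∈ Ioc 0 1 → ψ w ≤ a * x + b * y → ψinv (a * x + b * y) ≤ w :=
    pseudoInverse_le_of_le hcont hanti hψ1 hinv₁ hinv₂ hinv₃
  have hbound {t : ℝ} (ht0 : 0 ≤ t) (ht : t ∉ ψ '' Ioc 0 1) : ∀ z ∈ Ioc 0 1, ψ z ≤ t :=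
    fun z hz => (lt_of_notMem_image_Ioc hcont hψ1 ht0 ht hz).le
  by_cases hxI : x ∈ ψ '' Ioc 0 1 <;> by_cases hyI : y ∈ ψ '' Ioc 0 1
  · obtain ⟨hψx, hx'⟩ := hinv₂ x hxI
    obtain ⟨hψy, hy'⟩ := hinv₂ y hyI
    refine hle (convex_Ioc 0 1 hx' hy' ha.le hb.le hab) ?_
    simpa only [smul_eq_mul, hψx, hψy] using hconv.2 hx' hy' ha.le hb.le hab
  · obtain ⟨hψx, hx'⟩ := hinv₂ x hxI
    rw [hinv₃ y hy hyI, mul_zero, add_zero]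
    refine hle ⟨mul_pos ha hx'.1, ?_⟩ ?_
    · nlinarith [hx'.2]
    · have := hconv.map_mul_le_of_forall_le (hbound hy hyI) hx' hb.le ha (by linarith)
      rw [hψx] at this
      linarith
  · obtain ⟨hψy, hy'⟩ := hinv₂ y hyI
    rw [hinv₃ x hx hxI, mul_zero, zero_add]
    refine hle ⟨mul_pos hb hy'.1, ?_⟩ ?_
    · nlinarith [hy'.2]
    · have := hconv.map_mul_le_of_forall_le (hbound hx hxI) hy' ha.le hb hab
      rw [hψy] at this
      linarith
  · have hmix : a * x + b * y ∉ ψ '' Ioc 0 1 := by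
      rintro ⟨u, hu, hψu⟩
      have hux := lt_of_notMem_image_Ioc hcont hψ1 hx hxI hu
      have huy := lt_of_notMem_image_Ioc hcont hψ1 hy hyI hu
      nlinarith [mul_lt_mul_of_pos_left hux ha, mul_lt_mul_of_pos_left huy hb]
    rw [hinv₃ x hx hxI, hinv₃ y hy hyI, hinv₃ _ (by positivity) hmix]
    simp

end Generator

noncomputable def archimedeanCopula (ψ ψinv : ℝ → ℝ) (u v : ℝ) : ℝ :=
  if u = 0 ∨ v = 0 then 0 else ψinv (ψ u + ψ v)

section Copula

variable {ψ ψinv : ℝ → ℝ}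

theorem archimedeanCopula_comm (u v : ℝ) :
    archimedeanCopula ψ ψinv u v = archimedeanCopula ψ ψinv v u := by
  simp only [archimedeanCopula, or_comm, add_comm]

@[simp]
theorem archimedeanCopula_zero_left (v : ℝ) : archimedeanCopula ψ ψinv 0 v = 0 :=
  if_pos (Or.inl rfl)

@[simp]
theorem archimedeanCopula_zero_right (u : ℝ) : archimedeanCopula ψ ψinv u 0 = 0 :=
  if_pos (Or.inr rfl)

theorem archimedeanCopula_of_ne_zero {u v : ℝ} (hu : u ≠ 0) (hv : v ≠ 0) :
    archimedeanCopula ψ ψinv u v = ψinv (ψ u + ψ v) :=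
  if_neg (not_or.2 ⟨hu, hv⟩)

theorem archimedeanCopula_nonneg (hanti : StrictAntiOn ψ (Ioc 0 1)) (hψ1 : ψ 1 = 0)
    (hinv₂ : ∀ t ∈ ψ '' Ioc (0:ℝ) 1, ψ (ψinv t) = t ∧ ψinv t ∈ Ioc (0:ℝ) 1)
    (hinv₃ : ∀ t : ℝ, 0 ≤ t → t ∉ ψ '' Ioc (0:ℝ) 1 → ψinv t = 0) {u v : ℝ}
    (hu : u ∈ Icc 0 1) (hv : v ∈ Icc 0 1) : 0 ≤ archimedeanCopula ψ ψinv u v := by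
  unfold archimedeanCopula
  split_ifs with h
  · exact le_rfl
  obtain ⟨hu0, hv0⟩ := not_or.1 h
  have hψu := nonneg_of_strictAntiOn_Ioc hanti hψ1 ⟨hu.1.lt_of_ne' hu0, hu.2⟩
  have hψv := nonneg_of_strictAntiOn_Ioc hanti hψ1 ⟨hv.1.lt_of_ne' hv0, hv.2⟩
  exact (pseudoInverse_mem_Icc hinv₂ hinv₃ (add_nonneg hψu hψv)).1

theorem archimedeanCopula_mono_right (hcont : ContinuousOn ψ (Ioc 0 1))
    (hanti : StrictAntiOn ψ (Ioc 0 1)) (hψ1 : ψ 1 = 0)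
    (hinv₂ : ∀ t ∈ ψ '' Ioc (0:ℝ) 1, ψ (ψinv t) = t ∧ ψinv t ∈ Ioc (0:ℝ) 1)
    (hinv₃ : ∀ t : ℝ, 0 ≤ t → t ∉ ψ '' Ioc (0:ℝ) 1 → ψinv t = 0) {u v₁ v₂ : ℝ}
    (hu : u ∈ Icc 0 1) (hv₁ : v₁ ∈ Icc 0 1) (hv₂ : v₂ ∈ Icc 0 1) (hv : v₁ ≤ v₂) :
    archimedeanCopula ψ ψinv u v₁ ≤ archimedeanCopula ψ ψinv u v₂ := by
  by_cases h : u = 0 ∨ v₁ = 0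
  · rw [archimedeanCopula, if_pos h]
    exact archimedeanCopula_nonneg hanti hψ1 hinv₂ hinv₃ hu hv₂
  obtain ⟨hu0, hv₁0⟩ := not_or.1 h
  have hu' : u ∈ Ioc 0 1 := ⟨hu.1.lt_of_ne' hu0, hu.2⟩
  have hv₁' : v₁ ∈ Ioc 0 1 := ⟨hv₁.1.lt_of_ne' hv₁0, hv₁.2⟩
  have hv₂' : v₂ ∈ Ioc 0 1 := ⟨hv₁'.1.trans_le hv, hv₂.2⟩
  have hψu := nonneg_of_strictAntiOn_Ioc hanti hψ1 hu'
  rw [archimedeanCopula_of_ne_zero hu0 hv₁0, archimedeanCopula_of_ne_zero hu0 hv₂'.1.ne']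
  exact antitoneOn_pseudoInverse hcont hanti hψ1 hinv₂ hinv₃
    (add_nonneg hψu (nonneg_of_strictAntiOn_Ioc hanti hψ1 hv₂'))
    (add_nonneg hψu (nonneg_of_strictAntiOn_Ioc hanti hψ1 hv₁'))
    (add_le_add_right (hanti.antitoneOn hv₁' hv₂' hv) _)

theorem archimedeanCopula_two_increasing (hcont : ContinuousOn ψ (Ioc 0 1))
    (hanti : StrictAntiOn ψ (Ioc 0 1)) (hconv : ConvexOn ℝ (Ioc 0 1) ψ) (hψ1 : ψ 1 = 0)
    (hinv₁ : ∀ u ∈ Ioc (0:ℝ) 1, ψinv (ψ u) = u)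
    (hinv₂ : ∀ t ∈ ψ '' Ioc (0:ℝ) 1, ψ (ψinv t) = t ∧ ψinv t ∈ Ioc (0:ℝ) 1)
    (hinv₃ : ∀ t : ℝ, 0 ≤ t → t ∉ ψ '' Ioc (0:ℝ) 1 → ψinv t = 0) {u₁ u₂ v₁ v₂ : ℝ}
    (hu₁ : u₁ ∈ Icc 0 1) (hu₂ : u₂ ∈ Icc 0 1) (hv₁ : v₁ ∈ Icc 0 1) (hv₂ : v₂ ∈ Icc 0 1)
    (hu : u₁ ≤ u₂) (hv : v₁ ≤ v₂) :
    0 ≤ archimedeanCopula ψ ψinv u₂ v₂ - archimedeanCopula ψ ψinv u₂ v₁ -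
      archimedeanCopula ψ ψinv u₁ v₂ + archimedeanCopula ψ ψinv u₁ v₁ := by
  rcases eq_or_ne u₁ 0 with rfl | hu₁0
  · rw [archimedeanCopula_zero_left, archimedeanCopula_zero_left]
    linarith [archimedeanCopula_mono_right hcont hanti hψ1 hinv₂ hinv₃ hu₂ hv₁ hv₂ hv]
  rcases eq_or_ne v₁ 0 with rfl | hv₁0
  · rw [archimedeanCopula_zero_right, archimedeanCopula_zero_right, archimedeanCopula_comm u₁,
      archimedeanCopula_comm u₂]
    linarith [archimedeanCopula_mono_right hcont hanti hψ1 hinv₂ hinv₃ hv₂ hu₁ hu₂ hu]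
  have hu₁' : u₁ ∈ Ioc 0 1 := ⟨hu₁.1.lt_of_ne' hu₁0, hu₁.2⟩
  have hv₁' : v₁ ∈ Ioc 0 1 := ⟨hv₁.1.lt_of_ne' hv₁0, hv₁.2⟩
  have hu₂' : u₂ ∈ Ioc 0 1 := ⟨hu₁'.1.trans_le hu, hu₂.2⟩
  have hv₂' : v₂ ∈ Ioc 0 1 := ⟨hv₁'.1.trans_le hv, hv₂.2⟩
  have hψu := hanti.antitoneOn hu₁' hu₂' hu
  have hψv := hanti.antitoneOn hv₁' hv₂' hv
  have hψ₂ := add_nonneg (nonneg_of_strictAntiOn_Ioc hanti hψ1 hu₂')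
    (nonneg_of_strictAntiOn_Ioc hanti hψ1 hv₂')
  rw [archimedeanCopula_of_ne_zero hu₁0 hv₁0, archimedeanCopula_of_ne_zero hu₁0 hv₂'.1.ne',
    archimedeanCopula_of_ne_zero hu₂'.1.ne' hv₁0,
    archimedeanCopula_of_ne_zero hu₂'.1.ne' hv₂'.1.ne']
  have hconvex := (convexOn_pseudoInverse hcont hanti hconv hψ1 hinv₁ hinv₂ hinv₃)
    |>.map_add_map_le_of_add_eq (p := ψ u₂ + ψ v₂) (q := ψ u₁ + ψ v₁) (x := ψ u₂ + ψ v₁)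
      (y := ψ u₁ + ψ v₂) (mem_Ici.2 hψ₂) (mem_Ici.2 (by linarith)) (by linarith) (by linarith)
      (by ring)
  linarith

end Copula

theorem archimedean_is_copula_general
    (ψ ψinv : ℝ → ℝ)
    (hcont : ContinuousOn ψ (Ioc (0:ℝ) 1))
    (hanti : StrictAntiOn ψ (Ioc (0:ℝ) 1))
    (hconv : ConvexOn ℝ (Ioc (0:ℝ) 1) ψ)
    (hψ1 : ψ 1 = 0)
    (hinv₁ : ∀ u ∈ Ioc (0:ℝ) 1, ψinv (ψ u) = u)
    (hinv₂ : ∀ t ∈ ψ '' Ioc (0:ℝ) 1, ψ (ψinv t) = t ∧ ψinv t ∈ Ioc (0:ℝ) 1)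
    (hinv₃ : ∀ t : ℝ, 0 ≤ t → t ∉ ψ '' Ioc (0:ℝ) 1 → ψinv t = 0)
    (C : ℝ → ℝ → ℝ)
    (hC : ∀ u v, C u v = if u = 0 ∨ v = 0 then 0 else ψinv (ψ u + ψ v)) :
    (∀ u ∈ Icc (0:ℝ) 1, C u 0 = 0 ∧ C 0 u = 0) ∧
    (∀ u ∈ Icc (0:ℝ) 1, C u 1 = u ∧ C 1 u = u) ∧
    (∀ u₁ u₂ v₁ v₂ : ℝ, u₁ ∈ Icc (0:ℝ) 1 → u₂ ∈ Icc (0:ℝ) 1 →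
      v₁ ∈ Icc (0:ℝ) 1 → v₂ ∈ Icc (0:ℝ) 1 → u₁ ≤ u₂ → v₁ ≤ v₂ →
      0 ≤ C u₂ v₂ - C u₂ v₁ - C u₁ v₂ + C u₁ v₁) := by
  obtain rfl : C = archimedeanCopula ψ ψinv := funext₂ hC
  refine ⟨fun u _ => ⟨archimedeanCopula_zero_right u, archimedeanCopula_zero_left u⟩,
    fun u hu => ?_,
    fun _ _ _ _ => archimedeanCopula_two_increasing hcont hanti hconv hψ1 hinv₁ hinv₂ hinv₃⟩
  rcases eq_or_ne u 0 with rfl | hu0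
  · exact ⟨archimedeanCopula_zero_left 1, archimedeanCopula_zero_right 1⟩
  rw [archimedeanCopula_of_ne_zero hu0 one_ne_zero, archimedeanCopula_of_ne_zero one_ne_zero hu0,
    hψ1, add_zero, zero_add, hinv₁ u ⟨hu.1.lt_of_ne' hu0, hu.2⟩]
  exact ⟨rfl, rfl⟩

/-- The Archimedean construction yields a valid bivariate copula: for a continuous, strictly
decreasing, convex generator `ψ` on `(0,1]` with `ψ(1) = 0` and pseudo-inverse `ψinv`,
the function `C(u,v) = ψinv(ψ(u) + ψ(v))` (set to `0` if `u = 0` or `v = 0`) is grounded,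
has uniform margins, and is 2-increasing. -/
theorem archimedean_is_copula
    (ψ ψinv : ℝ → ℝ)
    (hcont : ContinuousOn ψ (Ioc (0:ℝ) 1))
    (hanti : StrictAntiOn ψ (Ioc (0:ℝ) 1))
    (hconv : ConvexOn ℝ (Ioc (0:ℝ) 1) ψ)
    (hψ1 : ψ 1 = 0) (hψnn : ∀ u ∈ Ioc (0:ℝ) 1, 0 ≤ ψ u)
    (hinv₁ : ∀ u ∈ Ioc (0:ℝ) 1, ψinv (ψ u) = u)
    (hinv₂ : ∀ t ∈ ψ '' Ioc (0:ℝ) 1, ψ (ψinv t) = t ∧ ψinv t ∈ Ioc (0:ℝ) 1)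
    (hinv₃ : ∀ t : ℝ, 0 ≤ t → t ∉ ψ '' Ioc (0:ℝ) 1 → ψinv t = 0)
    (C : ℝ → ℝ → ℝ)
    (hC : ∀ u v, C u v = if u = 0 ∨ v = 0 then 0 else ψinv (ψ u + ψ v)) :
    (∀ u ∈ Icc (0:ℝ) 1, C u 0 = 0 ∧ C 0 u = 0) ∧
    (∀ u ∈ Icc (0:ℝ) 1, C u 1 = u ∧ C 1 u = u) ∧
    (∀ u₁ u₂ v₁ v₂ : ℝ, u₁ ∈ Icc (0:ℝ) 1 → u₂ ∈ Icc (0:ℝ) 1 →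
      v₁ ∈ Icc (0:ℝ) 1 → v₂ ∈ Icc (0:ℝ) 1 → u₁ ≤ u₂ → v₁ ≤ v₂ →
      0 ≤ C u₂ v₂ - C u₂ v₁ - C u₁ v₂ + C u₁ v₁) :=
  archimedean_is_copula_general ψ ψinv hcont hanti hconv hψ1 hinv₁ hinv₂ hinv₃ C hC
end
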